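/- If nonnegative integers n₁ ≥ n₂ ≥ 0 and a₁ ≥ a₂ ≥ a₃ ≥ 0 satisfy F_{n₁} + F_{n₂} = 2^{a₁} + 2^{a₂} + 2^{a₃} with n₁ ≥ 3, then |α^{n₁}/√5 - 2^{a₁}| < 2.9 · max{2^{a₂}, α^{n₂}}, where α = (1+√5)/2. -/

import Mathlib

/-! By Binet, `α ^ n₁ / √5 = F_{n₁} + β ^ n₁ / √5`, so the equation turns the left-hand side
into `|2 ^ a₂ + 2 ^ a₃ - F_{n₂} + β ^ n₁ / √5|`. Since `|β| < 1` and `√5 > 2`, the error term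
is below `1/2`, and `F_{n₂} ≤ α ^ n₂`; with `M = max (2 ^ a₂) (α ^ n₂) ≥ 1` this bounds the
expression by `2.5 M`. -/

namespace Real

open scoped goldenRatio

theorem abs_goldenConj_pow_le_one (n : ℕ) : |ψ ^ n| ≤ 1 := by
  rw [abs_pow]
  exact pow_le_one₀ (abs_nonneg ψ)
    (abs_le.2 ⟨neg_one_lt_goldenConj.le, goldenConj_neg.le.trans zero_le_one⟩)

theorem goldenRatio_pow_div_sqrt_five (n : ℕ) : φ ^ n / √5 = Nat.fib n + ψ ^ n / √5 := by
  rw [coe_fib_eq]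
  ring

theorem two_lt_sqrt_five : 2 < √5 := by
  rw [show (2 : ℝ) = √(2 ^ 2) by simp]
  exact sqrt_lt_sqrt (by norm_num) (by norm_num)

theorem abs_goldenConj_pow_div_sqrt_five_lt (n : ℕ) : |ψ ^ n / √5| < 1 / 2 := by
  have hsqrt : 0 < √5 := zero_lt_two.trans two_lt_sqrt_five
  rw [abs_div, abs_of_pos hsqrt, div_lt_iff₀ hsqrt]
  linarith [abs_goldenConj_pow_le_one n, two_lt_sqrt_five]

theorem fib_le_goldenRatio_pow (n : ℕ) : (Nat.fib n : ℝ) ≤ φ ^ n := by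
  have hφn : 1 ≤ φ ^ n := one_le_pow₀ one_lt_goldenRatio.le
  have hdiv : φ ^ n / √5 ≤ φ ^ n / 2 :=
    div_le_div_of_nonneg_left (by positivity) zero_lt_two two_lt_sqrt_five.le
  linarith [goldenRatio_pow_div_sqrt_five n, (abs_lt.1 (abs_goldenConj_pow_div_sqrt_five_lt n)).1]

end Real

open Real goldenRatio

theorem stmt_15_general (n₁ n₂ a₁ a₂ a₃ : ℕ) (ha₂ : a₃ ≤ a₂)
    (h : Nat.fib n₁ + Nat.fib n₂ = 2 ^ a₁ + 2 ^ a₂ + 2 ^ a₃) :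
    |((1 + Real.sqrt 5) / 2) ^ n₁ / Real.sqrt 5 - 2 ^ a₁| <
      2.9 * max ((2 : ℝ) ^ a₂) (((1 + Real.sqrt 5) / 2) ^ n₂) := by
  change |φ ^ n₁ / √5 - 2 ^ a₁| < 2.9 * max ((2 : ℝ) ^ a₂) (φ ^ n₂)
  have hsum : (Nat.fib n₁ : ℝ) + Nat.fib n₂ = 2 ^ a₁ + 2 ^ a₂ + 2 ^ a₃ := by exact_mod_cast h
  have hpow : (2 : ℝ) ^ a₃ ≤ 2 ^ a₂ := pow_le_pow_right₀ one_le_two ha₂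
  have hM₁ : (1 : ℝ) ≤ max (2 ^ a₂) (φ ^ n₂) := le_max_of_le_left (one_le_pow₀ one_le_two)
  have herr := abs_lt.1 (abs_goldenConj_pow_div_sqrt_five_lt n₁)
  rw [goldenRatio_pow_div_sqrt_five, abs_lt]
  constructor
  · linarith [fib_le_goldenRatio_pow n₂, le_max_right ((2 : ℝ) ^ a₂) (φ ^ n₂),
      pow_nonneg zero_le_two (M₀ := ℝ) a₂, pow_nonneg zero_le_two (M₀ := ℝ) a₃]
  · linarith [Nat.cast_nonneg (α := ℝ) (Nat.fib n₂), le_max_left ((2 : ℝ) ^ a₂) (φ ^ n₂)]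

theorem stmt_15 (n₁ n₂ a₁ a₂ a₃ : ℕ) (hn : n₂ ≤ n₁) (ha₁ : a₂ ≤ a₁) (ha₂ : a₃ ≤ a₂)
    (h : Nat.fib n₁ + Nat.fib n₂ = 2 ^ a₁ + 2 ^ a₂ + 2 ^ a₃) (h3 : 3 ≤ n₁) :
    |((1 + Real.sqrt 5) / 2) ^ n₁ / Real.sqrt 5 - 2 ^ a₁| <
      2.9 * max ((2 : ℝ) ^ a₂) (((1 + Real.sqrt 5) / 2) ^ n₂) :=
  stmt_15_general n₁ n₂ a₁ a₂ a₃ ha₂ h
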